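/- Let p be a prime, G a finite group with a normal Sylow p-subgroup P, and Q a finite p-group. Then there is a bijection between Rep(Q,G) and the set of orbits of Rep(Q,P) under the action of the Weyl group W_G(P) ≤ Out(P) (acting by postcomposition), and this bijection is equivariant for the actions of Out(Q) by precomposition on both sides. -/
import Mathlib


/-- The subgroup of inner automorphisms of `Q`. -/
def Inn (Q : Type) [Group Q] : Subgroup (MulAut Q) := (MulAut.conj (G := Q)).range

instance Inn.normal (Q : Type) [Group Q] : (Inn Q).Normal := by
  constructor
  rintro - ⟨q, rfl⟩ g
  refine ⟨g q, ?_⟩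
  ext x
  simp [MulAut.conj_apply, map_mul, map_inv]

/-- The outer automorphism group `Out Q = Aut(Q)/Inn(Q)`. -/
def Out (Q : Type) [Group Q] : Type := MulAut Q ⧸ Inn Q

instance (Q : Type) [Group Q] : Group (Out Q) := QuotientGroup.Quotient.group _

/-- Two homomorphisms `Q → G` are identified in `Rep(Q,G)` iff they are conjugate in `G`. -/
instance homConjSetoid (Q G : Type) [Group Q] [Group G] : Setoid (Q →* G) where
  r f g := ∃ x : G, ∀ q, g q = x⁻¹ * f q * x
  iseqv := by
    refine ⟨fun f => ⟨1, by simp⟩, ?_, ?_⟩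
    · rintro f g ⟨x, hx⟩
      exact ⟨x⁻¹, fun q => by simp [hx q, mul_assoc]⟩
    · rintro f g h ⟨x, hx⟩ ⟨y, hy⟩
      exact ⟨x * y, fun q => by simp [hx q, hy q, mul_assoc]⟩

/-- `Rep(Q,G) = Hom(Q,G)/G`: conjugacy classes of homomorphisms `Q → G`. -/
def RepCl (Q G : Type) [Group Q] [Group G] : Type := Quotient (homConjSetoid Q G)

/-- `Out Q` acts on `Rep(Q,G)` by precomposition: `[α] • [f] = [f ∘ α⁻¹]`. -/
instance (Q G : Type) [Group Q] [Group G] : SMul (Out Q) (RepCl Q G) where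
  smul o c :=
    Quotient.liftOn' o
      (fun α : MulAut Q =>
        Quotient.map (fun f : Q →* G => f.comp (α⁻¹ : MulAut Q).toMonoidHom)
          (by rintro f g ⟨x, hx⟩; exact ⟨x, fun q => hx _⟩) c)
      (by
        rintro α β h
        rw [QuotientGroup.leftRel_apply] at h
        obtain ⟨q, hq⟩ := h
        induction c using Quotient.inductionOn with
        | h f =>
          apply Quotient.sound
          refine ⟨f q, fun z => ?_⟩
          have hβ : β⁻¹ = (MulAut.conj q)⁻¹ * α⁻¹ := by
            rw [hq]; group
          simp only [MonoidHom.comp_apply, MulEquiv.coe_toMonoidHom, hβ]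
          have : ((MulAut.conj q)⁻¹ * α⁻¹) z = q⁻¹ * (α⁻¹ z) * q := by
            simp [MulAut.conj_inv_apply]
          rw [this]
          simp [map_mul, map_inv])

instance (Q G : Type) [Group Q] [Group G] : MulAction (Out Q) (RepCl Q G) where
  one_smul c := by
    induction c using Quotient.inductionOn with
    | h f => apply Quotient.sound; exact ⟨1, fun q => by simp [MonoidHom.comp_apply]⟩
  mul_smul o₁ o₂ c := by
    induction o₁ using Quotient.inductionOn' with
    | h α =>
      induction o₂ using Quotient.inductionOn' with
      | h β =>
        induction c using Quotient.inductionOn with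
        | h f =>
          apply Quotient.sound
          exact ⟨1, fun q => by simp [MonoidHom.comp_apply, mul_inv_rev]⟩

/-- A class in `Rep(Q,G)` lies in `Inj(Q,G)` iff it is the class of an injective homomorphism. -/
def IsInjClass {Q G : Type} [Group Q] [Group G] (c : RepCl Q G) : Prop :=
  ∃ f : Q →* G, Function.Injective f ∧ (⟦f⟧ : RepCl Q G) = c

/-- `Inj(Q,G) ⊆ Rep(Q,G)`: classes of injective homomorphisms. -/
def InjCl (Q G : Type) [Group Q] [Group G] : Type := {c : RepCl Q G // IsInjClass c}

instance (Q G : Type) [Group Q] [Group G] : SMul (Out Q) (InjCl Q G) where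
  smul o c := ⟨o • c.1, by
    obtain ⟨c₁, f, hf, rfl⟩ := c
    induction o using Quotient.inductionOn' with
    | h α =>
      exact ⟨f.comp (α⁻¹ : MulAut Q).toMonoidHom,
        hf.comp (α⁻¹ : MulAut Q).injective, rfl⟩⟩

instance (Q G : Type) [Group Q] [Group G] : MulAction (Out Q) (InjCl Q G) where
  one_smul c := Subtype.ext (one_smul _ c.1)
  mul_smul o₁ o₂ c := Subtype.ext (mul_smul o₁ o₂ c.1)

/-- The canonical projection `Aut(P) → Out(P)`. -/
def toOut (P : Type) [Group P] : MulAut P →* Out P := QuotientGroup.mk' (Inn P)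

/-- `Out P` acts on `Rep(Q,P)` by postcomposition: `[β] • [f] = [β ∘ f]`. -/
instance postSMul (Q P : Type) [Group Q] [Group P] : SMul (Out P) (RepCl Q P) where
  smul o c :=
    Quotient.liftOn' o
      (fun β : MulAut P =>
        Quotient.map (fun f : Q →* P => β.toMonoidHom.comp f)
          (by
            rintro f g ⟨x, hx⟩
            exact ⟨β x, fun q => by simp [MonoidHom.comp_apply, hx q, map_mul, map_inv]⟩) c)
      (by
        rintro β β' h
        rw [QuotientGroup.leftRel_apply] at h
        obtain ⟨q, hq⟩ := h
        induction c using Quotient.inductionOn with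
        | h f =>
          apply Quotient.sound
          refine ⟨(β q)⁻¹, fun z => ?_⟩
          have hβ' : β' = β * MulAut.conj q := by
            rw [hq]; group
          simp only [MonoidHom.comp_apply, MulEquiv.coe_toMonoidHom, hβ']
          have : (β * MulAut.conj q) (f z) = β (q * f z * q⁻¹) := by
            simp [MulAut.conj_apply]
          rw [this]
          simp [map_mul, map_inv, mul_assoc])

instance postMulAction (Q P : Type) [Group Q] [Group P] : MulAction (Out P) (RepCl Q P) where
  one_smul c := by
    induction c using Quotient.inductionOn with
    | h f => apply Quotient.sound; exact ⟨1, fun q => by simp [MonoidHom.comp_apply]⟩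
  mul_smul o₁ o₂ c := by
    induction o₁ using Quotient.inductionOn' with
    | h α =>
      induction o₂ using Quotient.inductionOn' with
      | h β =>
        induction c using Quotient.inductionOn with
        | h f =>
          apply Quotient.sound
          exact ⟨1, fun q => by simp [MonoidHom.comp_apply]⟩

/-- For a normal Sylow `p`-subgroup `P` of `G` (so that `N_G(P) = G`), the Weyl group
`W_G(P) = N_G(P)/(P ⬝ C_G(P))`, realized as a subgroup of `Out P`: it is the image of the
conjugation homomorphism `G → Aut(P) → Out(P)`. -/
def weyl (G : Type) [Group G] (P : Subgroup G) [P.Normal] : Subgroup (Out P) :=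
  ((toOut P).comp MulAut.conjNormal).range

/-- The action of `Out Q` by precomposition descends to the `W_G(P)`-orbits of `Rep(Q,P)`,
since pre- and post-composition commute. -/
def orbitSMul (Q G : Type) [Group Q] [Group G] (P : Subgroup G) [P.Normal] (o : Out Q) :
    Quotient (MulAction.orbitRel (weyl G P) (RepCl Q P)) →
      Quotient (MulAction.orbitRel (weyl G P) (RepCl Q P)) :=
  Quotient.map' (fun c => o • c)
    (by
      rintro c c' ⟨w, rfl⟩
      refine ⟨w, ?_⟩
      induction o using Quotient.inductionOn' with
      | h α =>
        induction w with
        | mk w hw =>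
          induction w using Quotient.inductionOn' with
          | h β =>
            induction c' using Quotient.inductionOn with
            | h f =>
              apply Quotient.sound
              exact ⟨1, fun q => by simp [MonoidHom.comp_apply]⟩)


/-- The class of a homomorphism in `Rep(Q,G)`. -/
def mkRep {Q G : Type} [Group Q] [Group G] (f : Q →* G) : RepCl Q G := ⟦f⟧

/-- The orbit of a class in `Rep(Q,P)` under the Weyl group. -/
def mkOrb {Q G : Type} [Group Q] [Group G] (P : Subgroup G) [P.Normal] (c : RepCl Q P) :
    Quotient (MulAction.orbitRel (weyl G P) (RepCl Q P)) := Quotient.mk'' c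

lemma post_smul_mk {Q P : Type} [Group Q] [Group P] (β : MulAut P) (f : Q →* P) :
    toOut P β • mkRep f = mkRep (β.toMonoidHom.comp f) := rfl

lemma pre_smul_mk {Q G : Type} [Group Q] [Group G] (α : MulAut Q) (f : Q →* G) :
    toOut Q α • (mkRep f : RepCl Q G) = mkRep (f.comp (α⁻¹ : MulAut Q).toMonoidHom) := rfl

lemma orbitSMul_mk (Q G : Type) [Group Q] [Group G] (P : Subgroup G) [P.Normal] (o : Out Q)
    (c : RepCl Q P) :
    orbitSMul Q G P o (mkOrb P c) = mkOrb P (o • c) := rfl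

lemma orbit_mk_smul_eq {Q G : Type} [Group Q] [Group G] (P : Subgroup G) [P.Normal]
    (w : weyl G P) (c : RepCl Q P) : mkOrb P (w • c) = mkOrb P c :=
  Quotient.sound' ⟨w, rfl⟩

lemma subgroup_smul_def {Q G : Type} [Group Q] [Group G] (P : Subgroup G) [P.Normal]
    (w : weyl G P) (c : RepCl Q P) : w • c = (w : Out P) • c := rfl

/-- **Section 2: `Rep(Q,G) = Rep(Q,P)/W_G(P)`.**  If `G` is a finite group with a normal Sylow
`p`-subgroup `P` and `Q` is a finite `p`-group, then restriction induces a bijection between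
`Rep(Q,G)` and the orbits of `Rep(Q,P)` under the Weyl group `W_G(P) ≤ Out(P)` (acting by
postcomposition), and this bijection is equivariant for the precomposition actions of `Out Q`. -/
theorem repCl_equiv_weyl_orbits (p : ℕ) [Fact p.Prime]
    (G : Type) [Group G] [Fintype G] (P : Sylow p G) [(P : Subgroup G).Normal]
    (Q : Type) [Group Q] [Fintype Q] (hQ : IsPGroup p Q) :
    ∃ e : RepCl Q G ≃
        Quotient (MulAction.orbitRel (weyl G (P : Subgroup G)) (RepCl Q (P : Subgroup G))),
      ∀ (o : Out Q) (c : RepCl Q G),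
        e (o • c) = orbitSMul Q G (P : Subgroup G) o (e c) := by

  classical
  set P' : Subgroup G := (P : Subgroup G) with hP'
  have hle : ∀ f : Q →* G, f.range ≤ P' := by
    intro f
    have hrange : IsPGroup p f.range := hQ.of_surjective f.rangeRestrict f.rangeRestrict_surjective
    obtain ⟨R, hR⟩ := hrange.exists_le_sylow
    haveI := Sylow.unique_of_normal P ‹(P : Subgroup G).Normal›
    have : R = P := Subsingleton.elim R P
    simpa [this] using hR
  let res : (Q →* G) → (Q →* P') := fun f =>
    f.codRestrict P' (fun q => hle f ⟨q, rfl⟩)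
  have res_apply : ∀ (f : Q →* G) (q : Q), ((res f q : P') : G) = f q := fun _ _ => rfl
  have fwd_wd : ∀ f g : Q →* G, (homConjSetoid Q G).r f g →
      mkOrb P' (mkRep (res f)) = mkOrb P' (mkRep (res g)) := by
    rintro f g ⟨x, hx⟩
    have hmem : toOut P' (MulAut.conjNormal x⁻¹) ∈ weyl G P' := ⟨x⁻¹, rfl⟩
    have key : (⟨toOut P' (MulAut.conjNormal x⁻¹), hmem⟩ : weyl G P') • mkRep (res f)
        = mkRep (res g) := by
      rw [subgroup_smul_def]
      show toOut P' (MulAut.conjNormal x⁻¹) • mkRep (res f) = mkRep (res g)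
      rw [post_smul_mk]
      refine Quotient.sound ⟨1, fun q => ?_⟩
      apply Subtype.ext
      show ((res g q : P') : G)
          = ((1 : P') : G)⁻¹ * ((MulAut.conjNormal x⁻¹ (res f q) : P') : G) * ((1 : P') : G)
      rw [MulAut.conjNormal_apply]
      simp [res_apply, hx q, mul_assoc]
    rw [← key]
    exact (orbit_mk_smul_eq P' _ _).symm
  let fwd : RepCl Q G → Quotient (MulAction.orbitRel (weyl G P') (RepCl Q P')) :=
    Quotient.lift (fun f : Q →* G => mkOrb P' (mkRep (res f))) fwd_wd
  let ext0 : RepCl Q P' → RepCl Q G :=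
    Quotient.map (fun f : Q →* P' => P'.subtype.comp f)
      (by
        rintro f g ⟨⟨x, hxP⟩, hx⟩
        refine ⟨x, fun q => ?_⟩
        have h2 := congrArg (fun z : P' => (z : G)) (hx q)
        simpa using h2)
  have ext0_wd : ∀ c c' : RepCl Q P',
      (MulAction.orbitRel (weyl G P') (RepCl Q P')).r c c' → ext0 c = ext0 c' := by
    rintro c c' ⟨⟨w, x, hx⟩, rfl⟩
    induction c' using Quotient.inductionOn with
    | h f =>
      have hsm : (⟨w, x, hx⟩ : weyl G P') • (mkRep f : RepCl Q P')
          = mkRep ((MulAut.conjNormal x : MulAut P').toMonoidHom.comp f) := by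
        rw [subgroup_smul_def]
        show w • (mkRep f : RepCl Q P') = _
        rw [← hx]
        exact post_smul_mk _ _
      show ext0 ((⟨w, x, hx⟩ : weyl G P') • (mkRep f : RepCl Q P')) = ext0 (mkRep f)
      rw [hsm]
      refine Quotient.sound ⟨x, fun q => ?_⟩
      show (f q : G) = x⁻¹ * ((MulAut.conjNormal x (f q) : P') : G) * x
      rw [MulAut.conjNormal_apply]
      group
  let bwd : Quotient (MulAction.orbitRel (weyl G P') (RepCl Q P')) → RepCl Q G :=
    Quotient.lift ext0 ext0_wd
  have left_inv : Function.LeftInverse bwd fwd := by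
    intro c
    induction c using Quotient.inductionOn with
    | h f =>
      show (mkRep (P'.subtype.comp (res f)) : RepCl Q G) = mkRep f
      refine Quotient.sound ⟨1, fun q => ?_⟩
      simp [MonoidHom.comp_apply]
      rfl
  have right_inv : Function.RightInverse bwd fwd := by
    intro c
    induction c using Quotient.inductionOn with
    | h c' =>
      induction c' using Quotient.inductionOn with
      | h f =>
        show mkOrb P' (mkRep (res (P'.subtype.comp f))) = mkOrb P' (mkRep f)
        have : res (P'.subtype.comp f) = f := by
          ext q
          rfl
        rw [this]
  refine ⟨Equiv.mk fwd bwd left_inv right_inv, ?_⟩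
  intro o c
  induction o using Quotient.inductionOn' with
  | h α =>
    induction c using Quotient.inductionOn with
    | h f =>
      show fwd (toOut Q α • (mkRep f : RepCl Q G))
          = orbitSMul Q G P' (toOut Q α) (fwd (mkRep f))
      rw [pre_smul_mk]
      show mkOrb P' (mkRep (res (f.comp (α⁻¹ : MulAut Q).toMonoidHom)))
          = orbitSMul Q G P' (toOut Q α) (mkOrb P' (mkRep (res f)))
      rw [orbitSMul_mk, pre_smul_mk]
      have : res (f.comp (α⁻¹ : MulAut Q).toMonoidHom)
          = (res f).comp (α⁻¹ : MulAut Q).toMonoidHom := by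
        ext q
        rfl
      rw [this]
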